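/- arXiv:2210.12468 — 4 statements merged into one kernel-verified Lean document; each statement's English description precedes it below -/
import Mathlib

section
/- There is an absolute constant C > 0 such that for every real matrix A ∈ ℝ^{m×n} with m ≥ n ≥ 4, there exist an integer d ≤ n/4 and a matrix V ∈ ℝ^{d×n} whose rows are orthonormal (V Vᵀ = I_d) such that every row of the matrix A(I − VᵀV) has ℓ₂-norm at most C · herdisc(A) · log(8m/n). -/
open Matrix

/-- The discrepancy of a real matrix `A` with respect to colorings `x ∈ {-1,1}^n`. -/
noncomputable def disc {m n : Type*} [Fintype m] [Fintype n] (A : Matrix m n ℝ) : ℝ :=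
  sInf {d : ℝ | ∃ x : n → ℝ, (∀ i, x i = 1 ∨ x i = -1) ∧ d = ‖A.mulVec x‖}

/-- The hereditary discrepancy of `A`: the maximum of `disc B` over all matrices `B`
obtained from `A` by deleting a subset of the columns. -/
noncomputable def herdisc {m n : Type*} [Fintype m] [Fintype n] (A : Matrix m n ℝ) : ℝ :=
  sSup {d : ℝ | ∃ S : Finset n, d = disc (A.submatrix id (fun j : S => (j : n)))}

/-!
Greedy Gram–Schmidt with threshold `t = 16 · herdisc A`: as long as some row `a_j` has a
residual of norm `> t` after projecting away the directions chosen so far, add its normalised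
residual as a new row of `V`. If this ran for `D = ⌊n/4⌋ + 1` steps, the chosen rows `B` and the
orthonormal rows `Q` would make `B Qᵀ` lower triangular with diagonal `> t`, so
`det (B Qᵀ) > t^D`. But by Cauchy–Binet and Cauchy–Schwarz, `det (B Qᵀ)² ≤ 2^n · max_S det (B_S)²`
over the `D × D` minors, and each minor has `|det| ≤ (4 · herdisc A)^D` (Lovász–Spencer–
Vesztergombi: rounding a point of `[-1,1]^D` one binary digit at a time with partial colorings
puts `B_S [-1,1]^D` inside `2^D` cubes of radius `2 · herdisc A + ε`; compare volumes). As
`2^n ≤ 16^D`, this is impossible, so the process stops after `d ≤ n/4` steps with all residuals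
at most `16 · herdisc A ≤ 8 · herdisc A · log (8m/n)`.
-/

open Finset

section Colorings

variable {m n : Type*} [Fintype n]

/-- `herdisc A ≤ H`, phrased through integer partial colorings so that no `sInf`/`sSup` is
involved: every set `S` of columns carries a coloring `x ∈ {-1, 1}^S`, extended by `0`, with
`‖A x‖∞ ≤ H`. -/
def HerdiscLE (A : Matrix m n ℝ) (H : ℝ) : Prop :=
  ∀ S : Finset n, ∃ x : n → ℤ, (∀ i ∈ S, x i = 1 ∨ x i = -1) ∧ (∀ i ∉ S, x i = 0) ∧
    ∀ j, |(A *ᵥ fun i => (x i : ℝ)) j| ≤ H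

theorem exists_disc_eq_norm_mulVec [Fintype m] (A : Matrix m n ℝ) :
    ∃ x : n → ℝ, (∀ i, x i = 1 ∨ x i = -1) ∧ disc A = ‖A *ᵥ x‖ := by
  have hfin : {d : ℝ | ∃ x : n → ℝ, (∀ i, x i = 1 ∨ x i = -1) ∧ d = ‖A *ᵥ x‖}.Finite := by
    refine ((Set.finite_univ (α := n → ({1, -1} : Finset ℝ))).image
      fun y => ‖A *ᵥ fun i => (y i : ℝ)‖).subset ?_
    rintro d ⟨y, hy, rfl⟩
    exact ⟨fun i => ⟨y i, by rcases hy i with h | h <;> simp [h]⟩, trivial, rfl⟩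
  refine Set.Nonempty.csInf_mem ?_ hfin
  exact ⟨_, fun _ => 1, fun _ => Or.inl rfl, rfl⟩

theorem disc_submatrix_le_herdisc [Fintype m] (A : Matrix m n ℝ) (S : Finset n) :
    disc (A.submatrix id (fun j : S => (j : n))) ≤ herdisc A :=
  le_csSup ((Set.finite_range fun S : Finset n => disc (A.submatrix id (fun j : S => (j : n))))
    |>.bddAbove.mono (by rintro _ ⟨T, rfl⟩; exact ⟨T, rfl⟩)) ⟨S, rfl⟩

theorem herdiscLE_herdisc [Fintype m] (A : Matrix m n ℝ) : HerdiscLE A (herdisc A) := by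
  classical
  intro S
  set B := A.submatrix id (fun j : S => (j : n))
  obtain ⟨y, hy, hdisc⟩ := exists_disc_eq_norm_mulVec B
  set x : n → ℤ := fun i => if h : i ∈ S then (if y ⟨i, h⟩ = 1 then 1 else -1) else 0
  have hxy : ∀ i : S, (x i : ℝ) = y i := fun i => by
    rcases hy i with h | h <;> norm_num [x, h]
  refine ⟨x, fun i hi => by by_cases h : y ⟨i, hi⟩ = 1 <;> simp [x, hi, h],
    fun i hi => by simp [x, hi], fun j => ?_⟩
  have hrow : (A *ᵥ fun i => (x i : ℝ)) j = (B *ᵥ y) j :=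
    (Fintype.sum_of_injective Subtype.val Subtype.val_injective _ _
      (fun i hi => by simp [x, show i ∉ S from fun h => hi ⟨⟨i, h⟩, rfl⟩])
      (fun i => by simp [B, hxy])).symm
  calc _ = |(B *ᵥ y) j| := by rw [hrow]
    _ ≤ ‖B *ᵥ y‖ := norm_le_pi_norm (B *ᵥ y) j
    _ = disc B := hdisc.symm
    _ ≤ herdisc A := disc_submatrix_le_herdisc A S

end Colorings

namespace HerdiscLE

variable {m n : Type*} [Fintype n] {A : Matrix m n ℝ} {H : ℝ}

theorem nonneg (hA : HerdiscLE A H) (j : m) : 0 ≤ H := by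
  obtain ⟨x, -, -, hx⟩ := hA ∅
  exact (abs_nonneg _).trans (hx j)

theorem submatrix {m' n' : Type*} [Fintype n'] (hA : HerdiscLE A H) (r : m' → m)
    {s : n' → n} (hs : Function.Injective s) : HerdiscLE (A.submatrix r s) H := by
  classical
  intro S
  obtain ⟨x, hS, hnotS, hx⟩ := hA (S.map ⟨s, hs⟩)
  refine ⟨x ∘ s, fun i hi => hS _ (mem_map_of_mem _ hi),
    fun i hi => hnotS _ (by simpa [hs.eq_iff] using hi), fun j => ?_⟩
  convert hx (r j) using 2
  refine Fintype.sum_of_injective s hs _ _ (fun k hk => ?_) (fun i => rfl)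
  show A (r j) k * (x k : ℝ) = 0
  rw [hnotS k fun h => hk (by obtain ⟨i, -, rfl⟩ := mem_map.mp h; exact ⟨i, rfl⟩),
    Int.cast_zero, mul_zero]

theorem exists_halving (hA : HerdiscLE A H) (ℓ : ℕ) (z : n → ℤ) (hz : ∀ i, |z i| ≤ 2 ^ (ℓ + 1)) :
    ∃ χ z' : n → ℤ, (∀ i, z i = 2 * z' i + χ i) ∧ (∀ i, |z' i| ≤ 2 ^ ℓ) ∧
      ∀ j, |(A *ᵥ fun i => (χ i : ℝ)) j| ≤ H := by
  classical
  obtain ⟨χ, hodd, heven, hχ⟩ := hA {i | z i % 2 = 1}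
  have hparity : ∀ i, (z i % 2 = 1 ∧ (χ i = 1 ∨ χ i = -1)) ∨ (z i % 2 = 0 ∧ χ i = 0) := fun i => by
    by_cases h : z i % 2 = 1
    · exact Or.inl ⟨h, hodd i (by simpa using h)⟩
    · exact Or.inr ⟨by omega, heven i (by simpa using h)⟩
  refine ⟨χ, fun i => (z i - χ i) / 2, fun i => ?_, fun i => ?_, hχ⟩
  · beta_reduce
    rcases hparity i with ⟨hp, h | h⟩ | ⟨hp, h⟩ <;> omega
  · have := hz i
    rw [pow_succ, abs_le] at this
    rw [abs_le]
    beta_reduce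
    rcases hparity i with ⟨hp, h | h⟩ | ⟨hp, h⟩ <;> omega

theorem exists_signs_near_dyadic (hA : HerdiscLE A H) (ℓ : ℕ) (z : n → ℤ)
    (hz : ∀ i, |z i| ≤ 2 ^ ℓ) :
    ∃ x : n → ℤ, (∀ i, x i = 1 ∨ x i = -1) ∧
      ∀ j, |(A *ᵥ fun i => (z i : ℝ) / 2 ^ ℓ - x i) j| ≤ (2 - (2 ^ ℓ)⁻¹) * H := by
  classical
  induction ℓ generalizing z with
  | zero =>
    obtain ⟨χ, hS, hnotS, hχ⟩ := hA {i | z i = 0}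
    refine ⟨z + χ, fun i => ?_, fun j => ?_⟩
    · have := hz i
      rw [pow_zero, abs_le] at this
      by_cases h : z i = 0
      · simpa [h] using hS i (by simp [h])
      · have := hnotS i (by simpa using h)
        simp only [Pi.add_apply]
        omega
    · have : (fun i => (z i : ℝ) / 2 ^ 0 - ((z + χ) i : ℤ)) = -fun i => (χ i : ℝ) := by
        ext i; simp
      rw [this, Matrix.mulVec_neg]
      norm_num [hχ j]
  | succ ℓ ih =>
    obtain ⟨χ, z', hzz', hz', hχ⟩ := hA.exists_halving ℓ z hz
    obtain ⟨x, hx, hx'⟩ := ih z' hz'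
    refine ⟨x, hx, fun j => ?_⟩
    have hsplit : (fun i => (z i : ℝ) / 2 ^ (ℓ + 1) - x i) =
        ((2 : ℝ) ^ (ℓ + 1))⁻¹ • (fun i => (χ i : ℝ)) + fun i => (z' i : ℝ) / 2 ^ ℓ - x i := by
      ext i
      simp only [Pi.add_apply, Pi.smul_apply, smul_eq_mul, hzz' i]
      push_cast
      field_simp
      ring
    rw [hsplit, Matrix.mulVec_add, Matrix.mulVec_smul, Pi.add_apply, Pi.smul_apply, smul_eq_mul]
    calc _ ≤ |((2 : ℝ) ^ (ℓ + 1))⁻¹ * (A *ᵥ fun i => (χ i : ℝ)) j| +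
          |(A *ᵥ fun i => (z' i : ℝ) / 2 ^ ℓ - x i) j| := abs_add_le _ _
      _ ≤ ((2 : ℝ) ^ (ℓ + 1))⁻¹ * H + (2 - (2 ^ ℓ)⁻¹) * H := by
        rw [abs_mul, abs_of_pos (by positivity)]
        gcongr
        exacts [hχ j, hx' j]
      _ = (2 - (2 ^ (ℓ + 1))⁻¹) * H := by
        field_simp
        ring

end HerdiscLE

open MeasureTheory in
theorem abs_det_mul_le_of_forall_dist_le {ι : Type*} [Fintype ι] [DecidableEq ι]
    (B : Matrix ι ι ℝ) {ρ : ℝ} (hρ : 0 ≤ ρ) (s : Finset (ι → ℝ))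
    (hs : ∀ c ∈ Metric.closedBall (0 : ι → ℝ) 1, ∃ y ∈ s, dist (B *ᵥ c) y ≤ ρ) :
    |B.det| * 2 ^ Fintype.card ι ≤ #s * (2 * ρ) ^ Fintype.card ι := by
  have hsub : toLin' B '' Metric.closedBall 0 1 ⊆ ⋃ y ∈ s, Metric.closedBall y ρ := by
    rintro _ ⟨c, hc, rfl⟩
    obtain ⟨y, hy, hdist⟩ := hs c hc
    exact Set.mem_biUnion hy hdist
  have hvol := (measure_mono (μ := volume) hsub).trans (measure_biUnion_finset_le s _)
  rw [Measure.addHaar_image_linearMap, LinearMap.det_toLin',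
    Real.volume_pi_closedBall _ zero_le_one] at hvol
  simp only [Real.volume_pi_closedBall _ hρ, sum_const, nsmul_eq_mul] at hvol
  rw [← ENNReal.ofReal_mul (abs_nonneg _), ← ENNReal.ofReal_natCast,
    ← ENNReal.ofReal_mul (by positivity), ENNReal.ofReal_le_ofReal_iff (by positivity)] at hvol
  simpa using hvol

theorem exists_dyadic_dist_le {ι : Type*} [Fintype ι] {c : ι → ℝ}
    (hc : c ∈ Metric.closedBall 0 1) (ℓ : ℕ) :
    ∃ z : ι → ℤ, (∀ i, |z i| ≤ 2 ^ ℓ) ∧ dist (fun i => (z i : ℝ) / 2 ^ ℓ) c ≤ (2 ^ ℓ)⁻¹ := by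
  have hpos : (0 : ℝ) < 2 ^ ℓ := by positivity
  have hc1 : ∀ i, |c i| ≤ 1 :=
    fun i => (norm_le_pi_norm c i).trans (mem_closedBall_zero_iff.mp hc)
  refine ⟨fun i => ⌊2 ^ ℓ * c i⌋, fun i => ?_, (dist_pi_le_iff (by positivity)).mpr fun i => ?_⟩
  · obtain ⟨h1, h2⟩ := abs_le.mp (hc1 i)
    rw [abs_le]
    constructor
    · exact Int.le_floor.mpr (by push_cast; nlinarith)
    · have : (⌊2 ^ ℓ * c i⌋ : ℝ) ≤ 2 ^ ℓ := (Int.floor_le _).trans (by nlinarith)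
      exact_mod_cast this
  · calc dist ((⌊2 ^ ℓ * c i⌋ : ℝ) / 2 ^ ℓ) (c i) =
          |(⌊2 ^ ℓ * c i⌋ : ℝ) - 2 ^ ℓ * c i| / 2 ^ ℓ := by
          rw [Real.dist_eq, ← abs_of_pos hpos, ← abs_div, abs_of_pos hpos]
          congr 1
          field_simp
      _ ≤ 1 / 2 ^ ℓ := by
          gcongr
          rw [abs_le]
          constructor <;> linarith [Int.floor_le (2 ^ ℓ * c i), Int.lt_floor_add_one (2 ^ ℓ * c i)]
      _ = (2 ^ ℓ)⁻¹ := one_div _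

namespace HerdiscLE

variable {n : Type*} [Fintype n] {H : ℝ}

theorem exists_signs_dist_mulVec_le [Nonempty n] {B : Matrix n n ℝ} (hB : HerdiscLE B H)
    {c : n → ℝ} (hc : c ∈ Metric.closedBall 0 1) {ε : ℝ} (hε : 0 < ε) :
    ∃ x : n → ℤ, (∀ i, x i = 1 ∨ x i = -1) ∧
      dist (B *ᵥ c) (B *ᵥ fun i => (x i : ℝ)) ≤ ε + 2 * H := by
  obtain ⟨δ, hδ, hcont⟩ := Metric.continuous_iff.mp
    (continuous_const.matrix_mulVec continuous_id (A := fun _ : n → ℝ => B)) c ε hε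
  obtain ⟨ℓ, hℓ⟩ := exists_pow_lt_of_lt_one hδ (by norm_num : (1 / 2 : ℝ) < 1)
  obtain ⟨z, hz, hzc⟩ := exists_dyadic_dist_le hc ℓ
  obtain ⟨x, hx, hround⟩ := hB.exists_signs_near_dyadic ℓ z hz
  refine ⟨x, hx, (dist_triangle _ (B *ᵥ fun i => (z i : ℝ) / 2 ^ ℓ) _).trans (add_le_add ?_ ?_)⟩
  · rw [dist_comm]
    exact (hcont _ (hzc.trans_lt (by rwa [← inv_pow, ← one_div]))).le
  · rw [dist_eq_norm, ← mulVec_sub]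
    have hH := hB.nonneg (Classical.arbitrary n)
    refine (pi_norm_le_iff_of_nonneg (by positivity)).mpr fun j => ?_
    calc ‖_‖ = |(B *ᵥ fun i => (z i : ℝ) / 2 ^ ℓ - x i) j| := rfl
      _ ≤ (2 - (2 ^ ℓ)⁻¹) * H := hround j
      _ ≤ 2 * H := by nlinarith [inv_pos.mpr (by positivity : (0 : ℝ) < 2 ^ ℓ)]

open Filter Topology in
theorem abs_det_le [DecidableEq n] {B : Matrix n n ℝ} (hB : HerdiscLE B H) :
    |B.det| ≤ (4 * H) ^ Fintype.card n := by
  rcases isEmpty_or_nonempty n with hn | hn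
  · simp
  set s := (Fintype.piFinset fun _ : n => ({1, -1} : Finset ℤ)).image
    fun x => B *ᵥ fun i => (x i : ℝ)
  have hcard : (#s : ℝ) ≤ 2 ^ Fintype.card n := by
    exact_mod_cast card_image_le.trans (by simp [Fintype.card_piFinset])
  have hH := hB.nonneg (Classical.arbitrary n)
  have hcover : ∀ ε > 0, |B.det| ≤ (2 * (ε + 2 * H)) ^ Fintype.card n := fun ε hε => by
    have := abs_det_mul_le_of_forall_dist_le B (ρ := ε + 2 * H) (by positivity) s fun c hc => by
      obtain ⟨x, hx, hdist⟩ := hB.exists_signs_dist_mulVec_le hc hε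
      refine ⟨_, mem_image_of_mem _ (Fintype.mem_piFinset.mpr fun i => ?_), hdist⟩
      rcases hx i with h | h <;> simp [h]
    refine le_of_mul_le_mul_right (this.trans ?_) (by positivity : (0 : ℝ) < 2 ^ Fintype.card n)
    rw [mul_comm]
    gcongr
  have hlim : Tendsto (fun ε => (2 * (ε + 2 * H)) ^ Fintype.card n) (𝓝[>] 0)
      (𝓝 ((4 * H) ^ Fintype.card n)) := by
    have hcont : Continuous fun ε : ℝ => (2 * (ε + 2 * H)) ^ Fintype.card n := by fun_prop
    convert (hcont.tendsto 0).mono_left nhdsWithin_le_nhds using 2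
    ring
  exact ge_of_tendsto hlim (eventually_nhdsWithin_of_forall hcover)

end HerdiscLE

theorem sum_injective_eq_sum_strictMono_perm {M : Type*} [AddCommMonoid M] {d n : ℕ}
    (F : (Fin d → Fin n) → M) :
    ∑ p ∈ univ.filter Function.Injective, F p =
      ∑ g ∈ univ.filter StrictMono, ∑ σ : Equiv.Perm (Fin d), F (g ∘ σ) := by
  rw [← sum_product' (f := fun g (σ : Equiv.Perm (Fin d)) => F (g ∘ σ))]
  symm
  refine sum_nbij (fun gσ => gσ.1 ∘ gσ.2) (fun gσ h => ?_) (fun gσ h gσ' h' heq => ?_)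
    (fun p hp => ?_) (fun _ _ => rfl)
  · simp only [mem_product, mem_filter, mem_univ, true_and, and_true] at h ⊢
    exact h.injective.comp gσ.2.injective
  · simp only [coe_product, coe_filter, mem_univ, true_and, Set.mem_prod, Set.mem_ofPred_eq,
      coe_univ, Set.mem_univ, and_true] at h h'
    have hrange : Set.range gσ.1 = Set.range gσ'.1 := by
      rw [← gσ.2.surjective.range_comp gσ.1, ← gσ'.2.surjective.range_comp gσ'.1]
      exact congrArg Set.range heq
    have hg : gσ.1 = gσ'.1 := (h.range_inj h').mp hrange
    refine Prod.ext hg (Equiv.ext fun i => h.injective ?_)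
    simpa [hg] using congrFun heq i
  · simp only [coe_filter, mem_univ, true_and, Set.mem_ofPred_eq] at hp
    refine ⟨(p ∘ Tuple.sort p, (Tuple.sort p)⁻¹), ?_, ?_⟩
    · simp only [coe_product, coe_filter, mem_univ, true_and, Set.mem_prod, Set.mem_ofPred_eq,
        coe_univ, Set.mem_univ, and_true]
      exact (Tuple.monotone_sort p).strictMono_of_injective (hp.comp (Tuple.sort p).injective)
    · ext i
      simp

namespace Matrix

variable {R : Type*} [CommRing R] {d n : ℕ}

theorem det_mul_eq_sum_det_submatrix (M : Matrix (Fin d) (Fin n) R)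
    (N : Matrix (Fin n) (Fin d) R) :
    (M * N).det = ∑ p : Fin d → Fin n, (∏ i, N (p i) i) * (M.submatrix id p).det := by
  simp only [det_apply', mul_apply, prod_univ_sum, mul_sum, Fintype.piFinset_univ,
    submatrix_apply, id_eq]
  rw [sum_comm]
  refine sum_congr rfl fun p _ => sum_congr rfl fun σ _ => ?_
  rw [prod_mul_distrib]
  ring

theorem cauchy_binet (M : Matrix (Fin d) (Fin n) R) (N : Matrix (Fin n) (Fin d) R) :
    (M * N).det = ∑ g ∈ univ.filter StrictMono,
      (M.submatrix id g).det * (N.submatrix g id).det := by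
  classical
  rw [det_mul_eq_sum_det_submatrix, ← sum_filter_of_ne (p := Function.Injective) fun p _ h => by
    by_contra hp
    obtain ⟨i, j, hij, hne⟩ := Function.not_injective_iff.mp hp
    exact h (by rw [det_zero_of_column_eq hne fun k => by simp [hij], mul_zero]),
    sum_injective_eq_sum_strictMono_perm]
  refine sum_congr rfl fun g _ => ?_
  rw [det_apply' (N.submatrix g id), mul_sum]
  refine sum_congr rfl fun σ _ => ?_
  rw [show M.submatrix id (g ∘ σ) = (M.submatrix id g).submatrix id σ from rfl, det_permute']
  simp only [submatrix_apply, id_eq, Function.comp_apply]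
  ring

end Matrix

theorem card_filter_strictMono_le (d n : ℕ) :
    #(univ.filter (StrictMono : (Fin d → Fin n) → Prop)) ≤ 2 ^ n := by
  calc _ ≤ #(univ : Finset (Finset (Fin n))) := by
        refine card_le_card_of_injOn (fun g => univ.image g)
          (fun _ _ => mem_coe.mpr (mem_univ _)) fun g hg g' hg' h => ?_
        simp only [coe_filter, mem_univ, true_and, Set.mem_ofPred_eq] at hg hg'
        refine (hg.range_inj hg').mp ?_
        simpa using congrArg (fun s : Finset (Fin n) => (s : Set (Fin n))) h
    _ = 2 ^ n := by simp

theorem Matrix.det_mul_transpose_sq_le {d n : ℕ} (B Q : Matrix (Fin d) (Fin n) ℝ)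
    (hQ : Q * Qᵀ = 1) {K : ℝ}
    (hK : ∀ g : Fin d → Fin n, StrictMono g → |(B.submatrix id g).det| ≤ K) :
    (B * Qᵀ).det ^ 2 ≤ 2 ^ n * K ^ 2 := by
  set F := univ.filter (StrictMono : (Fin d → Fin n) → Prop)
  have hdetT : ∀ g : Fin d → Fin n, (Qᵀ.submatrix g id).det = (Q.submatrix id g).det :=
    fun g => by rw [← transpose_submatrix, det_transpose]
  have hQF : ∑ g ∈ F, (Q.submatrix id g).det ^ 2 = 1 := by
    simpa [hdetT, sq] using (cauchy_binet Q Qᵀ).symm.trans (by rw [hQ, det_one])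
  calc (B * Qᵀ).det ^ 2 = (∑ g ∈ F, (B.submatrix id g).det * (Q.submatrix id g).det) ^ 2 := by
        simp only [cauchy_binet, hdetT, F]
    _ ≤ (∑ g ∈ F, (B.submatrix id g).det ^ 2) * ∑ g ∈ F, (Q.submatrix id g).det ^ 2 :=
        sum_mul_sq_le_sq_mul_sq _ _ _
    _ ≤ ∑ g ∈ F, K ^ 2 := by
        rw [hQF, mul_one]
        refine sum_le_sum fun g hg => ?_
        obtain ⟨hlo, hhi⟩ := abs_le.mp (hK g (mem_filter.mp hg).2)
        exact sq_le_sq' hlo hhi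
    _ ≤ 2 ^ n * K ^ 2 := by
        rw [sum_const, nsmul_eq_mul]
        gcongr
        exact_mod_cast card_filter_strictMono_le d n

namespace InnerProductSpace

section

variable {𝕜 E : Type*} [RCLike 𝕜] [NormedAddCommGroup E] [InnerProductSpace 𝕜 E]
  {ι : Type*} [LinearOrder ι] [LocallyFiniteOrderBot ι] [WellFoundedLT ι]

theorem gramSchmidt_congr {f g : ι → E} {n : ι} (h : ∀ i ≤ n, f i = g i) :
    gramSchmidt 𝕜 f n = gramSchmidt 𝕜 g n := by
  induction n using WellFoundedLT.induction with
  | _ n ih =>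
    rw [gramSchmidt_def, gramSchmidt_def, h n le_rfl]
    refine congrArg _ (sum_congr rfl fun i hi => ?_)
    have hin := mem_Iio.mp hi
    rw [ih i hin fun j hj => h j (hj.trans hin.le)]

end

section

variable {E : Type*} [NormedAddCommGroup E] [InnerProductSpace ℝ E]
  {ι : Type*} [LinearOrder ι] [LocallyFiniteOrderBot ι] [WellFoundedLT ι]

theorem inner_gramSchmidt_self (f : ι → E) (n : ι) :
    inner ℝ (gramSchmidt ℝ f n) (f n) = ‖gramSchmidt ℝ f n‖ ^ 2 := by
  rw [gramSchmidt_def'' ℝ f n, inner_add_right, inner_sum, real_inner_self_eq_norm_sq,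
    add_eq_left]
  refine sum_eq_zero fun i hi => ?_
  rw [inner_smul_right, gramSchmidt_orthogonal ℝ f (mem_Iio.mp hi).ne', mul_zero]

theorem inner_gramSchmidtNormed_self (f : ι → E) (n : ι) :
    inner ℝ (gramSchmidtNormed ℝ f n) (f n) = ‖gramSchmidt ℝ f n‖ := by
  rw [gramSchmidtNormed, real_inner_smul_left, inner_gramSchmidt_self, RCLike.ofReal_real_eq_id,
    id_eq, sq, ← mul_assoc, inv_mul_mul_self]

theorem inner_gramSchmidtNormed_of_lt (f : ι → E) {i j : ι} (hij : i < j) :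
    inner ℝ (gramSchmidtNormed ℝ f j) (f i) = 0 := by
  rw [gramSchmidtNormed, real_inner_smul_left, gramSchmidt_inv_triangular ℝ f hij, mul_zero]

theorem gramSchmidt_eq_sub_sum_gramSchmidtNormed (f : ι → E) (n : ι) :
    gramSchmidt ℝ f n =
      f n - ∑ i ∈ Iio n, inner ℝ (gramSchmidtNormed ℝ f i) (f n) • gramSchmidtNormed ℝ f i := by
  rw [eq_sub_iff_add_eq]
  conv_rhs => rw [gramSchmidt_def'' ℝ f n]
  congr 1
  refine sum_congr rfl fun i _ => ?_
  simp only [gramSchmidtNormed, real_inner_smul_left, smul_smul, RCLike.ofReal_real_eq_id, id_eq]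
  ring_nf

end

variable {E : Type*} [NormedAddCommGroup E] [InnerProductSpace ℝ E]

theorem orthonormal_gramSchmidtNormed_fin {f : ℕ → E} {k : ℕ}
    (hf : ∀ i < k, gramSchmidt ℝ f i ≠ 0) :
    Orthonormal ℝ fun i : Fin k => gramSchmidtNormed ℝ f i := by
  have hne : ∀ i : Fin k, gramSchmidtNormed ℝ f i ≠ 0 := fun i => by
    simp [gramSchmidtNormed, hf i i.2]
  exact (gramSchmidtNormed_orthonormal' f).comp
    (fun i : Fin k => (⟨i, hne i⟩ : {i | gramSchmidtNormed ℝ f i ≠ 0}))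
    fun i j h => Fin.ext (congrArg Subtype.val h)

theorem gramSchmidt_update_self (f : ℕ → E) (k : ℕ) (x : E) :
    gramSchmidt ℝ (Function.update f k x) k =
      x - ∑ i : Fin k, inner ℝ (gramSchmidtNormed ℝ f i) x • gramSchmidtNormed ℝ f i := by
  have hbefore : ∀ i < k,
      gramSchmidtNormed ℝ (Function.update f k x) i = gramSchmidtNormed ℝ f i := fun i hi => by
    simp only [gramSchmidtNormed, gramSchmidt_congr (𝕜 := ℝ) fun j (hj : j ≤ i) =>
      Function.update_of_ne (hj.trans_lt hi).ne x f]
  rw [gramSchmidt_eq_sub_sum_gramSchmidtNormed, Function.update_self, Nat.Iio_eq_range,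
    ← Fin.sum_univ_eq_sum_range]
  simp only [hbefore _ (Fin.is_lt _)]

theorem exists_gramSchmidt_norm_gt_or_le {ι : Type*} (a : ι → E) (t : ℝ) (D : ℕ) :
    (∃ f : ℕ → E, ∀ i < D, f i ∈ Set.range a ∧ t < ‖gramSchmidt ℝ f i‖) ∨
      ∃ k < D, ∃ f : ℕ → E, (∀ i < k, t < ‖gramSchmidt ℝ f i‖) ∧
        ∀ j, ‖gramSchmidt ℝ (Function.update f k (a j)) k‖ ≤ t := by
  induction D with
  | zero => exact Or.inl ⟨0, fun i hi => absurd hi (Nat.not_lt_zero i)⟩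
  | succ D ih =>
    rcases ih with ⟨f, hf⟩ | ⟨k, hk, hshort⟩
    · by_cases hres : ∀ j, ‖gramSchmidt ℝ (Function.update f D (a j)) D‖ ≤ t
      · exact Or.inr ⟨D, D.lt_succ_self, f, fun i hi => (hf i hi).2, hres⟩
      obtain ⟨j, hj⟩ := not_forall.mp hres
      refine Or.inl ⟨Function.update f D (a j), fun i hi => ?_⟩
      rcases (Nat.lt_succ_iff_lt_or_eq.mp hi) with hi | rfl
      · rw [Function.update_of_ne hi.ne, gramSchmidt_congr (𝕜 := ℝ) fun l (hl : l ≤ i) =>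
          Function.update_of_ne (hl.trans_lt hi).ne _ f]
        exact hf i hi
      · exact ⟨by simp, not_le.mp hj⟩
    · exact Or.inr ⟨k, hk.trans D.lt_succ_self, hshort⟩

end InnerProductSpace

section Euclidean

variable {m n d : ℕ}

theorem Matrix.mul_transpose_eq_one_of_orthonormal {V : Matrix (Fin d) (Fin n) ℝ}
    (hV : Orthonormal ℝ fun i => WithLp.toLp 2 (V i)) : V * Vᵀ = 1 := by
  ext i l
  rw [one_apply, ← orthonormal_iff_ite.mp hV i l, EuclideanSpace.inner_toLp_toLp]
  simp [mul_apply, dotProduct, mul_comm]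

theorem Matrix.sqrt_sum_sq_mul_one_sub_apply (A : Matrix (Fin m) (Fin n) ℝ)
    (V : Matrix (Fin d) (Fin n) ℝ) (j : Fin m) :
    √(∑ k, ((A * (1 - Vᵀ * V) : Matrix (Fin m) (Fin n) ℝ) j k) ^ 2) =
      ‖WithLp.toLp 2 (A j) -
        ∑ i, inner ℝ (WithLp.toLp 2 (V i)) (WithLp.toLp 2 (A j)) • WithLp.toLp 2 (V i)‖ := by
  rw [EuclideanSpace.norm_eq]
  congr 1
  refine sum_congr rfl fun k _ => ?_
  rw [Real.norm_eq_abs, sq_abs]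
  rw [Matrix.mul_sub, Matrix.mul_one, ← Matrix.mul_assoc]
  simp [Matrix.mul_apply, EuclideanSpace.inner_toLp_toLp, dotProduct, mul_comm]

end Euclidean

namespace HerdiscLE

open InnerProductSpace

variable {m n : ℕ} {A : Matrix (Fin m) (Fin n) ℝ} {H : ℝ}

theorem prod_norm_gramSchmidt_sq_le (hA : HerdiscLE A H) {D : ℕ}
    (f : ℕ → EuclideanSpace ℝ (Fin n))
    (hf : ∀ i < D, f i ∈ Set.range fun j => WithLp.toLp 2 (A j)) :
    (∏ i : Fin D, ‖gramSchmidt ℝ f i‖) ^ 2 ≤ 2 ^ n * ((4 * H) ^ D) ^ 2 := by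
  by_cases hzero : ∃ i : Fin D, gramSchmidt ℝ f i = 0
  · obtain ⟨i, hi⟩ := hzero
    rw [prod_eq_zero (mem_univ i) (by rw [hi, norm_zero]), zero_pow two_ne_zero]
    positivity
  choose r hr using fun i : Fin D => hf i i.2
  set Q : Matrix (Fin D) (Fin n) ℝ := of fun i => (gramSchmidtNormed ℝ f i).ofLp
  have hQ : Q * Qᵀ = 1 := Matrix.mul_transpose_eq_one_of_orthonormal
    (orthonormal_gramSchmidtNormed_fin fun i hi => fun h => hzero ⟨⟨i, hi⟩, h⟩)
  have hentry : ∀ i l, (A.submatrix r id * Qᵀ) i l = inner ℝ (gramSchmidtNormed ℝ f l) (f i) :=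
    fun i l => by
    rw [← hr i, EuclideanSpace.inner_eq_star_dotProduct]
    simp [Q, Matrix.mul_apply, dotProduct]
  have hdet : (A.submatrix r id * Qᵀ).det = ∏ i : Fin D, ‖gramSchmidt ℝ f i‖ := by
    rw [Matrix.det_of_isLowerTriangular _ fun i l hil => by
      rw [hentry]; exact inner_gramSchmidtNormed_of_lt f hil]
    simp only [hentry, inner_gramSchmidtNormed_self]
  rw [← hdet]
  refine Matrix.det_mul_transpose_sq_le _ Q hQ fun g hg => ?_
  simpa using (hA.submatrix r hg.injective).abs_det_le

theorem exists_norm_gramSchmidt_le (hA : HerdiscLE A H) {D : ℕ} (hD0 : 0 < D) (hD : n ≤ 4 * D)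
    (f : ℕ → EuclideanSpace ℝ (Fin n))
    (hf : ∀ i < D, f i ∈ Set.range fun j => WithLp.toLp 2 (A j)) :
    ∃ i < D, ‖gramSchmidt ℝ f i‖ ≤ 16 * H := by
  by_contra! hlong
  have hH : 0 ≤ H := by
    obtain ⟨j, -⟩ := hf 0 hD0
    exact hA.nonneg j
  have hlt : (16 * H) ^ D < ∏ i : Fin D, ‖gramSchmidt ℝ f i‖ := by
    rcases hH.eq_or_lt with rfl | hpos
    · rw [mul_zero, zero_pow hD0.ne']
      exact prod_pos fun i _ => by simpa using hlong i i.2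
    · rw [← Fin.prod_const]
      exact prod_lt_prod_of_nonempty (fun _ _ => by positivity) (fun i _ => hlong i i.2)
        ⟨⟨0, hD0⟩, mem_univ _⟩
  have h2n : (2 : ℝ) ^ n ≤ 16 ^ D := by
    calc (2 : ℝ) ^ n ≤ 2 ^ (4 * D) := pow_le_pow_right₀ one_le_two hD
      _ = 16 ^ D := by rw [pow_mul]; norm_num
  have : ((16 * H) ^ D) ^ 2 < ((16 * H) ^ D) ^ 2 :=
    calc _ < (∏ i : Fin D, ‖gramSchmidt ℝ f i‖) ^ 2 :=
          pow_lt_pow_left₀ hlt (by positivity) two_ne_zero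
      _ ≤ 2 ^ n * ((4 * H) ^ D) ^ 2 := hA.prod_norm_gramSchmidt_sq_le f hf
      _ ≤ 16 ^ D * ((4 * H) ^ D) ^ 2 := by gcongr
      _ = ((16 * H) ^ D) ^ 2 := by
        rw [show 16 * H = 4 * (4 * H) by ring, mul_pow 4 (4 * H),
          show (16 : ℝ) ^ D = 4 ^ D * 4 ^ D by rw [← mul_pow]; norm_num]
        ring
  exact lt_irrefl _ this

end HerdiscLE

theorem two_le_log_eight_mul_div {m n : ℕ} (hn : 0 < n) (hnm : n ≤ m) :
    2 ≤ Real.log (8 * m / n) :=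
  calc (2 : ℝ) ≤ Real.log 8 := by
        rw [show (8 : ℝ) = 2 ^ 3 by norm_num, Real.log_pow]
        push_cast
        linarith [Real.log_two_gt_d9]
    _ ≤ Real.log (8 * m / n) := by
        refine Real.log_le_log (by norm_num) ?_
        rw [le_div_iff₀ (by positivity)]
        have : (n : ℝ) ≤ m := by exact_mod_cast hnm
        linarith

open InnerProductSpace in
theorem stmt1 :
    ∃ C : ℝ, 0 < C ∧
      ∀ (m n : ℕ) (A : Matrix (Fin m) (Fin n) ℝ), n ≤ m → 4 ≤ n →
        ∃ (d : ℕ) (V : Matrix (Fin d) (Fin n) ℝ),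
          4 * d ≤ n ∧ V * Vᵀ = 1 ∧
          ∀ j : Fin m,
            Real.sqrt (∑ k, ((A * (1 - Vᵀ * V) : Matrix (Fin m) (Fin n) ℝ) j k) ^ 2) ≤
              C * herdisc A * Real.log (8 * m / n) := by
  refine ⟨8, by norm_num, fun m n A hnm hn => ?_⟩
  have hA := herdiscLE_herdisc A
  have hH : 0 ≤ herdisc A := hA.nonneg ⟨0, by omega⟩
  have hlog := two_le_log_eight_mul_div (by omega) hnm
  rcases exists_gramSchmidt_norm_gt_or_le (fun j => WithLp.toLp 2 (A j)) (16 * herdisc A)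
    (n / 4 + 1) with ⟨f, hf⟩ | ⟨k, hk, f, hlong, hres⟩
  · obtain ⟨i, hi, hle⟩ :=
      hA.exists_norm_gramSchmidt_le (by omega) (by omega) f fun i hi => (hf i hi).1
    exact absurd (hf i hi).2 hle.not_gt
  have hne : ∀ i < k, gramSchmidt ℝ f i ≠ 0 := fun i hi h => by
    have := hlong i hi
    rw [h, norm_zero] at this
    linarith
  refine ⟨k, of fun i => (gramSchmidtNormed ℝ f i).ofLp, by omega,
    Matrix.mul_transpose_eq_one_of_orthonormal (orthonormal_gramSchmidtNormed_fin hne), fun j => ?_⟩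
  rw [Matrix.sqrt_sum_sq_mul_one_sub_apply]
  calc _ = ‖gramSchmidt ℝ (Function.update f k (WithLp.toLp 2 (A j))) k‖ := by
        rw [gramSchmidt_update_self]; rfl
    _ ≤ 16 * herdisc A := hres j
    _ ≤ 8 * herdisc A * Real.log (8 * m / n) := by nlinarith
end

section
/- Let A ∈ ℝ^{m×n} have rank n with rows a_1ᵀ,…,a_mᵀ, let H := AᵀA, and for each j ∈ [m] set y_j := H^{−1/2} a_j and X_j := (1/p_j)·y_j y_jᵀ − I_n, where p ∈ (0,1]^m is a probability vector (∑_j p_j = 1) with p_j ≥ β·σ_j(A)/n for some 1 ≤ β ≤ n. Let J be a random index in [m] with law p. Then E[X_J] = 0, and 0 ⪯ E[X_Jᵀ X_J] ⪯ (n/β − 1)·I_n; in particular ‖E[X_Jᵀ X_J]‖ ≤ n/β − 1. -/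
/-! Whitening by `S = H^{1/2}` makes the vectors `y_j = S⁻¹ a_j` isotropic, `∑ y_j y_jᵀ = I`,
with `‖y_j‖² = σ_j(A)`. Hence `E[X_J] = ∑ y_j y_jᵀ - I = 0`, and since `(y yᵀ)² = ‖y‖² y yᵀ`,
`E[X_J²] = ∑ (σ_j / p_j) y_j y_jᵀ - I`. The leverage condition says `σ_j / p_j ≤ n / β`, so
`(n/β - 1) I - E[X_J²] = ∑ (n/β - σ_j / p_j) y_j y_jᵀ ⪰ 0`. The norm of a symmetric operator is
the supremum of its Rayleigh quotient, which turns `0 ⪯ E[X_J²] ⪯ (n/β - 1) I` into the norm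
bound. -/

open Matrix MeasureTheory
open scoped Classical

/-- The leverage score of row `j` of `A`: `σ_j(A) = a_jᵀ (AᵀA)⁻¹ a_j`. -/
noncomputable def levScore {m n : ℕ} (A : Matrix (Fin m) (Fin n) ℝ) (j : Fin m) : ℝ :=
  A j ⬝ᵥ ((Aᵀ * A)⁻¹).mulVec (A j)

/-- The positive-semidefinite square root of a PSD matrix (junk value `0` otherwise). -/
noncomputable def psdSqrt {n : ℕ} (M : Matrix (Fin n) (Fin n) ℝ) : Matrix (Fin n) (Fin n) ℝ :=
  if h : M.PosSemidef then
    h.1.eigenvectorUnitary.1 * diagonal ((↑) ∘ (Real.sqrt ∘ h.1.eigenvalues)) *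
      (star h.1.eigenvectorUnitary : Matrix (Fin n) (Fin n) ℝ)
  else 0

/-- `y_j := H^{-1/2} a_j`, where `H = AᵀA`. -/
noncomputable def yVec {m n : ℕ} (A : Matrix (Fin m) (Fin n) ℝ) (j : Fin m) : Fin n → ℝ :=
  ((psdSqrt (Aᵀ * A))⁻¹).mulVec (A j)

/-- `X_j := (1/p_j) y_j y_jᵀ − I_n`. -/
noncomputable def Xmat {m n : ℕ} (A : Matrix (Fin m) (Fin n) ℝ) (p : Fin m → ℝ) (j : Fin m) :
    Matrix (Fin n) (Fin n) ℝ :=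
  (p j)⁻¹ • vecMulVec (yVec A j) (yVec A j) - 1

namespace Matrix

theorem isUnit_transpose_mul_self_of_rank_eq {m n R : Type*} [Fintype m] [Fintype n]
    [DecidableEq n] [Field R] [LinearOrder R] [IsStrictOrderedRing R] {A : Matrix m n R}
    (hA : A.rank = Fintype.card n) : IsUnit (Aᵀ * A) := by
  have hker : LinearMap.ker A.mulVecLin = ⊥ := by
    have := LinearMap.finrank_range_add_finrank_ker A.mulVecLin
    rw [← rank, hA, Module.finrank_fintype_fun_eq_card, Nat.add_eq_left] at this
    exact Submodule.finrank_eq_zero.mp this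
  rw [← mulVec_injective_iff_isUnit, ← coe_mulVecLin, ← LinearMap.ker_eq_bot,
    ker_mulVecLin_transpose_mul_self, hker]

section CommSemiring

variable {m n R : Type*} [CommSemiring R]

theorem sum_vecMulVec_rows [Fintype m] (A : Matrix m n R) :
    ∑ j, vecMulVec (A j) (A j) = Aᵀ * A := by
  ext
  simp [sum_apply, vecMulVec_apply, mul_apply]

variable [Fintype n]

theorem vecMulVec_mulVec_mulVec (B : Matrix m n R) (v w : n → R) :
    vecMulVec (B *ᵥ v) (B *ᵥ w) = B * vecMulVec v w * Bᵀ := by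
  rw [mul_vecMulVec, vecMulVec_mul, vecMul_transpose]

theorem vecMulVec_self_mul_self (v : n → R) :
    vecMulVec v v * vecMulVec v v = (v ⬝ᵥ v) • vecMulVec v v := by
  rw [vecMulVec_mul_vecMulVec, vecMulVec_smul]

end CommSemiring

section Whitening

variable {m n R : Type*} [Fintype m] [Fintype n] [DecidableEq n] [CommRing R]
  {S : Matrix n n R}

theorem sum_vecMulVec_inv_mulVec_rows {A : Matrix m n R} (hS : Sᵀ = S) (hSA : S * S = Aᵀ * A)
    (hunit : IsUnit S) : ∑ j, vecMulVec (S⁻¹ *ᵥ A j) (S⁻¹ *ᵥ A j) = 1 := by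
  have hdet : IsUnit S.det := (isUnit_iff_isUnit_det S).mp hunit
  calc ∑ j, vecMulVec (S⁻¹ *ᵥ A j) (S⁻¹ *ᵥ A j)
      = S⁻¹ * (∑ j, vecMulVec (A j) (A j)) * S⁻¹ᵀ := by
        simp only [vecMulVec_mulVec_mulVec, Finset.mul_sum, Finset.sum_mul]
    _ = S⁻¹ * S * (S * S⁻¹) := by
        rw [sum_vecMulVec_rows, ← hSA, transpose_nonsing_inv, hS, Matrix.mul_assoc,
          Matrix.mul_assoc, Matrix.mul_assoc]
    _ = 1 := by rw [nonsing_inv_mul _ hdet, mul_nonsing_inv _ hdet, Matrix.one_mul]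

theorem inv_mulVec_dotProduct_self (hS : Sᵀ = S) (a : n → R) :
    (S⁻¹ *ᵥ a) ⬝ᵥ (S⁻¹ *ᵥ a) = a ⬝ᵥ (S * S)⁻¹ *ᵥ a := by
  rw [dotProduct_mulVec, ← mulVec_transpose, transpose_nonsing_inv, hS, mulVec_mulVec,
    ← Matrix.mul_inv_rev, dotProduct_comm]

end Whitening

section Real

variable {ι n : Type*} [Fintype n]

theorem posSemidef_transpose_mul_self [Fintype ι] (A : Matrix ι n ℝ) :
    (Aᵀ * A).PosSemidef := by
  simpa [conjTranspose_eq_transpose_of_trivial] using posSemidef_conjTranspose_mul_self A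

theorem posSemidef_sum_smul_transpose_mul_self [Fintype ι] {p : ι → ℝ} (hp : ∀ j, 0 ≤ p j)
    (X : ι → Matrix n n ℝ) : (∑ j, p j • ((X j)ᵀ * X j)).PosSemidef :=
  posSemidef_sum _ fun j _ => (posSemidef_transpose_mul_self (X j)).smul (hp j)

end Real

end Matrix

theorem ContinuousLinearMap.norm_le_of_abs_re_inner_self_le {𝕜 E : Type*} [RCLike 𝕜]
    [NormedAddCommGroup E] [InnerProductSpace 𝕜 E] {T : E →L[𝕜] E}
    (hT : (T : E →ₗ[𝕜] E).IsSymmetric) {c : ℝ} (hc : 0 ≤ c)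
    (h : ∀ x, |RCLike.re (inner 𝕜 (T x) x)| ≤ c * ‖x‖ ^ 2) : ‖T‖ ≤ c := by
  rw [T.norm_eq_iSup_rayleighQuotient hT]
  refine ciSup_le fun x => ?_
  rcases eq_or_ne x 0 with rfl | hx
  · simpa using hc
  · rw [rayleighQuotient, reApplyInnerSelf, abs_div, abs_sq, div_le_iff₀ (by positivity)]
    exact h x

theorem Matrix.norm_toEuclideanCLM_le_of_posSemidef {ι : Type*} [Fintype ι] [DecidableEq ι]
    {M : Matrix ι ι ℝ} {c : ℝ} (hc : 0 ≤ c) (hM : M.PosSemidef)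
    (hcM : (c • 1 - M).PosSemidef) : ‖toEuclideanCLM (𝕜 := ℝ) M‖ ≤ c := by
  let E := EuclideanSpace ℝ ι
  have hT : ((toEuclideanCLM (𝕜 := ℝ) M : E →L[ℝ] E) : E →ₗ[ℝ] E).IsSymmetric := by
    rw [coe_toEuclideanCLM_eq_toEuclideanLin, isSymmetric_toEuclideanLin_iff]
    exact hM.1
  refine ContinuousLinearMap.norm_le_of_abs_re_inner_self_le hT hc fun x => ?_
  have h0 := hM.dotProduct_mulVec_nonneg (WithLp.ofLp x)
  have h1 := hcM.dotProduct_mulVec_nonneg (WithLp.ofLp x)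
  rw [RCLike.re_to_real, real_inner_comm, inner_toEuclideanCLM, ← real_inner_self_eq_norm_sq,
    EuclideanSpace.inner_eq_star_dotProduct]
  simp only [star_trivial, sub_mulVec, smul_mulVec, one_mulVec, dotProduct_sub, dotProduct_smul,
    smul_eq_mul, sub_nonneg] at h0 h1 ⊢
  rw [abs_of_nonneg h0]
  exact h1

section psdSqrt

variable {n : ℕ} {M : Matrix (Fin n) (Fin n) ℝ}

theorem psdSqrt_mul_self (h : M.PosSemidef) : psdSqrt M * psdSqrt M = M := by
  set U : Matrix (Fin n) (Fin n) ℝ := h.1.eigenvectorUnitary.1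
  set D : Matrix (Fin n) (Fin n) ℝ := diagonal ((↑) ∘ (Real.sqrt ∘ h.1.eigenvalues))
  have hU : star U * U = 1 := Unitary.coe_star_mul_self _
  have hD : D * D = diagonal (RCLike.ofReal ∘ h.1.eigenvalues) := by
    rw [diagonal_mul_diagonal]
    congr 1
    ext i
    simp [Real.mul_self_sqrt (h.eigenvalues_nonneg i)]
  conv_rhs => rw [h.1.spectral_theorem, Unitary.conjStarAlgAut_apply]
  calc psdSqrt M * psdSqrt M = U * (D * (star U * U) * D) * star U := by
        simp only [psdSqrt, dif_pos h, Matrix.mul_assoc, U, D]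
    _ = _ := by rw [hU, Matrix.mul_one, hD]

theorem posSemidef_psdSqrt (h : M.PosSemidef) : (psdSqrt M).PosSemidef := by
  rw [psdSqrt, dif_pos h, Matrix.star_eq_conjTranspose]
  exact (PosSemidef.diagonal fun i => by simp).mul_mul_conjTranspose_same _

theorem transpose_psdSqrt (h : M.PosSemidef) : (psdSqrt M)ᵀ = psdSqrt M := by
  rw [← conjTranspose_eq_transpose_of_trivial, (posSemidef_psdSqrt h).1.eq]

end psdSqrt

section yVec

variable {m n : ℕ} {A : Matrix (Fin m) (Fin n) ℝ}

theorem yVec_dotProduct_self (j : Fin m) : yVec A j ⬝ᵥ yVec A j = levScore A j := by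
  rw [yVec, inv_mulVec_dotProduct_self (transpose_psdSqrt (posSemidef_transpose_mul_self A)),
    psdSqrt_mul_self (posSemidef_transpose_mul_self A), levScore]

theorem sum_vecMulVec_yVec (hA : IsUnit (Aᵀ * A)) :
    ∑ j, vecMulVec (yVec A j) (yVec A j) = 1 := by
  have hH := posSemidef_transpose_mul_self A
  refine sum_vecMulVec_inv_mulVec_rows (transpose_psdSqrt hH) (psdSqrt_mul_self hH) ?_
  exact isUnit_of_mul_isUnit_left ((psdSqrt_mul_self hH).symm ▸ hA)

end yVec

section Xmat

variable {m n : ℕ} {A : Matrix (Fin m) (Fin n) ℝ} {p : Fin m → ℝ}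

theorem transpose_Xmat (j : Fin m) : (Xmat A p j)ᵀ = Xmat A p j := by
  rw [Xmat, transpose_sub, transpose_smul, transpose_one, transpose_vecMulVec]

theorem smul_Xmat_mul_self {j : Fin m} (hpj : p j ≠ 0) :
    p j • (Xmat A p j * Xmat A p j) =
      (yVec A j ⬝ᵥ yVec A j / p j) • vecMulVec (yVec A j) (yVec A j)
        - 2 • vecMulVec (yVec A j) (yVec A j) + p j • 1 := by
  simp only [Xmat, sub_mul, mul_sub, one_mul, mul_one, smul_mul_smul_comm,
    vecMulVec_self_mul_self, smul_smul]
  match_scalars <;> field_simp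
  ring

variable (hI : ∑ j, vecMulVec (yVec A j) (yVec A j) = 1) (hp : ∀ j, p j ≠ 0)
  (hsum : ∑ j, p j = 1)
include hI hp hsum

theorem sum_smul_Xmat : ∑ j, p j • Xmat A p j = 0 := by
  simp only [Xmat, smul_sub, smul_smul, mul_inv_cancel₀ (hp _), one_smul]
  rw [Finset.sum_sub_distrib, hI, ← Finset.sum_smul, hsum, one_smul, sub_self]

theorem sum_smul_transpose_Xmat_mul_Xmat :
    ∑ j, p j • ((Xmat A p j)ᵀ * Xmat A p j) =
      ∑ j, (yVec A j ⬝ᵥ yVec A j / p j) • vecMulVec (yVec A j) (yVec A j) - 1 := by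
  simp only [transpose_Xmat, smul_Xmat_mul_self (hp _)]
  rw [Finset.sum_add_distrib, Finset.sum_sub_distrib, ← Finset.smul_sum, hI, ← Finset.sum_smul,
    hsum, one_smul]
  abel

theorem posSemidef_sub_sum_smul_transpose_Xmat_mul_Xmat {d : ℝ}
    (hd : ∀ j, yVec A j ⬝ᵥ yVec A j / p j ≤ d) :
    ((d - 1) • (1 : Matrix (Fin n) (Fin n) ℝ) -
      ∑ j, p j • ((Xmat A p j)ᵀ * Xmat A p j)).PosSemidef := by
  have hsplit : (d - 1) • (1 : Matrix (Fin n) (Fin n) ℝ) -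
        ∑ j, p j • ((Xmat A p j)ᵀ * Xmat A p j) =
      ∑ j, (d - yVec A j ⬝ᵥ yVec A j / p j) • vecMulVec (yVec A j) (yVec A j) := by
    simp only [sum_smul_transpose_Xmat_mul_Xmat hI hp hsum, sub_smul, Finset.sum_sub_distrib,
      ← Finset.smul_sum, hI, one_smul]
    abel
  rw [hsplit]
  refine posSemidef_sum _ fun j _ => PosSemidef.smul ?_ (sub_nonneg.2 (hd j))
  simpa using posSemidef_vecMulVec_self_star (yVec A j)

end Xmat

/-- Since the random index `J` has law `p` on the finite set `[m]`, the expectations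
`E[X_J]` and `E[X_Jᵀ X_J]` are the weighted sums `∑ j, p j • X j` and
`∑ j, p j • X jᵀ X j`. -/
theorem stmt9 {m n : ℕ} (A : Matrix (Fin m) (Fin n) ℝ) (hA : A.rank = n)
    (β : ℝ) (hβ1 : 1 ≤ β) (hβn : β ≤ n)
    (p : Fin m → ℝ) (hp : ∀ j, 0 < p j ∧ p j ≤ 1) (hsum : (∑ j, p j) = 1)
    (hlev : ∀ j, β * levScore A j / n ≤ p j) :
    (∑ j, p j • Xmat A p j) = 0 ∧
    (∑ j, p j • ((Xmat A p j)ᵀ * Xmat A p j)).PosSemidef ∧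
    ((n / β - 1) • (1 : Matrix (Fin n) (Fin n) ℝ) -
        ∑ j, p j • ((Xmat A p j)ᵀ * Xmat A p j)).PosSemidef ∧
    ‖toEuclideanCLM (𝕜 := ℝ) (n := Fin n)
        (∑ j, p j • ((Xmat A p j)ᵀ * Xmat A p j))‖ ≤ n / β - 1 := by
  have hβ0 : 0 < β := one_pos.trans_le hβ1
  have hn0 : (0 : ℝ) < n := hβ0.trans_le hβn
  have hI := sum_vecMulVec_yVec
    (isUnit_transpose_mul_self_of_rank_eq (hA.trans (Fintype.card_fin n).symm))
  have hp0 : ∀ j, p j ≠ 0 := fun j => (hp j).1.ne'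
  have hd : ∀ j, yVec A j ⬝ᵥ yVec A j / p j ≤ n / β := fun j => by
    rw [yVec_dotProduct_self, div_le_div_iff₀ (hp j).1 hβ0]
    linarith [(div_le_iff₀ hn0).1 (hlev j)]
  have hc : 0 ≤ (n : ℝ) / β - 1 := sub_nonneg.2 ((one_le_div hβ0).2 hβn)
  have hlower := posSemidef_sum_smul_transpose_mul_self (fun j => (hp j).1.le) (Xmat A p)
  have hupper := posSemidef_sub_sum_smul_transpose_Xmat_mul_Xmat hI hp0 hsum hd
  exact ⟨sum_smul_Xmat hI hp0 hsum, hlower, hupper,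
    norm_toEuclideanCLM_le_of_posSemidef hc hlower hupper⟩
end

section
/- Let ε ∈ (0, 1/2). Let M ∈ ℝ^{m×n} satisfy (1−ε)‖x‖₂ ≤ ‖Mx‖₂ ≤ (1+ε)‖x‖₂ for all x ∈ ℝ^n, and let T ∈ ℝ^{n×n} be such that MT has orthonormal columns, i.e., (MT)ᵀ(MT) = I_n. Then every singular value of T lies in [1−2ε, 1+2ε]; that is, (1−2ε)‖v‖₂ ≤ ‖Tv‖₂ ≤ (1+2ε)‖v‖₂ for all v ∈ ℝ^n. -/
open Matrix

/-- The Euclidean (ℓ₂) norm of a vector in `ℝ^k`. -/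
noncomputable def l2 {k : ℕ} (x : Fin k → ℝ) : ℝ := Real.sqrt (∑ i, x i ^ 2)

lemma l2_nonneg {k : ℕ} (x : Fin k → ℝ) : 0 ≤ l2 x := Real.sqrt_nonneg _

lemma l2_eq_dot {k : ℕ} (x : Fin k → ℝ) : l2 x = Real.sqrt (x ⬝ᵥ x) := by
  simp [l2, dotProduct, sq]

theorem stmt11 {m n : ℕ} (ε : ℝ) (hε : ε ∈ Set.Ioo (0 : ℝ) (1/2))
    (M : Matrix (Fin m) (Fin n) ℝ)
    (hM : ∀ x : Fin n → ℝ, (1 - ε) * l2 x ≤ l2 (M.mulVec x) ∧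
            l2 (M.mulVec x) ≤ (1 + ε) * l2 x)
    (T : Matrix (Fin n) (Fin n) ℝ) (hT : (M * T)ᵀ * (M * T) = 1) :
    ∀ v : Fin n → ℝ, (1 - 2*ε) * l2 v ≤ l2 (T.mulVec v) ∧
      l2 (T.mulVec v) ≤ (1 + 2*ε) * l2 v := by
  intro v
  obtain ⟨hε0, hε2⟩ := hε
  have key : l2 (M.mulVec (T.mulVec v)) = l2 v := by
    rw [l2_eq_dot, l2_eq_dot v]
    congr 1
    have : M.mulVec (T.mulVec v) = (M * T).mulVec v := mulVec_mulVec _ _ _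
    rw [this]
    calc (M * T).mulVec v ⬝ᵥ (M * T).mulVec v
        = v ⬝ᵥ ((M * T)ᵀ * (M * T)).mulVec v := by
          have h : v ᵥ* ((M * T)ᵀ * (M * T)) = ((M * T) *ᵥ v) ᵥ* (M * T) := by
            rw [← vecMul_vecMul, vecMul_transpose]
          rw [dotProduct_mulVec, dotProduct_mulVec, h]
      _ = v ⬝ᵥ v := by rw [hT, one_mulVec]
  obtain ⟨h1, h2⟩ := hM (T.mulVec v)
  rw [key] at h1 h2
  have hTv := l2_nonneg (T.mulVec v)
  have hv := l2_nonneg v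
  constructor
  · nlinarith
  · nlinarith
end

section
/- Let n ≥ 1 and let a, b ∈ ℝ^n with a_i ≠ 0 for every i ∈ [n] and ‖b‖_∞ ≤ 1. Define U := {μ ∈ ℝ : ‖μ·a + b‖_∞ ≤ 1 and ‖μ·a − b‖_∞ ≤ 1}. Then U is a nonempty closed bounded interval [u, v] containing 0; for each μ ∈ {u, v}, max{‖μ·a + b‖_∞, ‖μ·a − b‖_∞} = 1; and conversely every t ∈ ℝ with max{‖t·a + b‖_∞, ‖t·a − b‖_∞} = 1 satisfies t ∈ {u, v}. -/
lemma max_abs_aux (x y : ℝ) : max |x + y| |x - y| = |x| + |y| := by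
  refine le_antisymm (max_le (abs_add_le x y) ?_) ?_
  · calc |x - y| = |x + -y| := by ring_nf
      _ ≤ |x| + |-y| := abs_add_le _ _
      _ = |x| + |y| := by rw [abs_neg]
  · rcases le_total 0 x with hx | hx <;> rcases le_total 0 y with hy | hy
    · calc |x| + |y| = x + y := by rw [abs_of_nonneg hx, abs_of_nonneg hy]
        _ ≤ |x + y| := le_abs_self _
        _ ≤ _ := le_max_left _ _
    · calc |x| + |y| = x - y := by rw [abs_of_nonneg hx, abs_of_nonpos hy]; ring
        _ ≤ |x - y| := le_abs_self _
        _ ≤ _ := le_max_right _ _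
    · calc |x| + |y| = -(x - y) := by rw [abs_of_nonpos hx, abs_of_nonneg hy]; ring
        _ ≤ |x - y| := neg_le_abs _
        _ ≤ _ := le_max_right _ _
    · calc |x| + |y| = -(x + y) := by rw [abs_of_nonpos hx, abs_of_nonpos hy]; ring
        _ ≤ |x + y| := neg_le_abs _
        _ ≤ _ := le_max_left _ _

lemma norm_attained_aux {n : ℕ} [Nonempty (Fin n)] (x : Fin n → ℝ) : ∃ i, ‖x‖ = |x i| := by
  obtain ⟨i, hi⟩ := Finite.exists_max (fun i => |x i|)
  refine ⟨i, le_antisymm ?_ ?_⟩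
  · exact (pi_norm_le_iff_of_nonneg (abs_nonneg _)).2 fun j => by
      rw [Real.norm_eq_abs]; exact hi j
  · rw [← Real.norm_eq_abs]; exact norm_le_pi_norm x i

/-- Here `‖·‖` on `Fin n → ℝ` is the sup (ℓ∞) norm. -/
theorem stmt12 {n : ℕ} (hn : 1 ≤ n) (a b : Fin n → ℝ)
    (ha : ∀ i, a i ≠ 0) (hb : ‖b‖ ≤ 1) :
    ∃ u v : ℝ, u ≤ 0 ∧ 0 ≤ v ∧
      {μ : ℝ | ‖μ • a + b‖ ≤ 1 ∧ ‖μ • a - b‖ ≤ 1} = Set.Icc u v ∧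
      (∀ μ ∈ ({u, v} : Set ℝ), max ‖μ • a + b‖ ‖μ • a - b‖ = 1) ∧
      (∀ t : ℝ, max ‖t • a + b‖ ‖t • a - b‖ = 1 → t = u ∨ t = v) := by
  haveI : Nonempty (Fin n) := ⟨⟨0, by omega⟩⟩
  have hne : (Finset.univ : Finset (Fin n)).Nonempty := Finset.univ_nonempty
  have habs : ∀ i, 0 < |a i| := fun i => abs_pos.2 (ha i)
  have hbi : ∀ i, |b i| ≤ 1 := fun i =>
    le_trans (by rw [← Real.norm_eq_abs]; exact norm_le_pi_norm b i) hb
  set V : ℝ := Finset.univ.inf' hne (fun i => (1 - |b i|) / |a i|) with hVdef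
  have hV0 : 0 ≤ V := Finset.le_inf' hne _ fun i _ =>
    div_nonneg (by linarith [hbi i]) (habs i).le
  have hVi : ∀ i, V * |a i| + |b i| ≤ 1 := by
    intro i
    have h1 : V ≤ (1 - |b i|) / |a i| := Finset.inf'_le _ (Finset.mem_univ i)
    have := (le_div_iff₀ (habs i)).1 h1
    linarith
  -- key characterization of membership
  have key : ∀ μ : ℝ, (‖μ • a + b‖ ≤ 1 ∧ ‖μ • a - b‖ ≤ 1) ↔
      ∀ i, |μ| * |a i| + |b i| ≤ 1 := by
    intro μ
    rw [pi_norm_le_iff_of_nonneg (by norm_num), pi_norm_le_iff_of_nonneg (by norm_num)]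
    constructor
    · rintro ⟨h1, h2⟩ i
      have := max_abs_aux (μ * a i) (b i)
      have h1' := h1 i; have h2' := h2 i
      simp only [Pi.add_apply, Pi.sub_apply, Pi.smul_apply, smul_eq_mul,
        Real.norm_eq_abs] at h1' h2'
      rw [← abs_mul]
      rw [show μ * a i + b i = μ * a i + b i from rfl] at this
      calc |μ * a i| + |b i| = max |μ * a i + b i| |μ * a i - b i| := this.symm
        _ ≤ 1 := max_le h1' h2'
    · intro h
      constructor <;> intro i <;>
        simp only [Pi.add_apply, Pi.sub_apply, Pi.smul_apply, smul_eq_mul,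
          Real.norm_eq_abs] <;>
        [exact le_trans (le_max_left _ _) (by rw [max_abs_aux, abs_mul]; exact h i);
         exact le_trans (le_max_right _ _) (by rw [max_abs_aux, abs_mul]; exact h i)]
  -- |μ| ≤ V iff all inequalities
  have key2 : ∀ μ : ℝ, (∀ i, |μ| * |a i| + |b i| ≤ 1) ↔ |μ| ≤ V := by
    intro μ
    rw [hVdef, Finset.le_inf'_iff]
    constructor
    · intro h i _
      rw [le_div_iff₀ (habs i)]
      linarith [h i]
    · intro h i
      have := (le_div_iff₀ (habs i)).1 (h i (Finset.mem_univ i))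
      linarith
  -- the max value function
  have fval : ∀ μ : ℝ, (∀ i, |μ| * |a i| + |b i| ≤ 1) →
      max ‖μ • a + b‖ ‖μ • a - b‖ ≤ 1 := fun μ h =>
    max_le ((key μ).2 h).1 ((key μ).2 h).2
  obtain ⟨i₀, _, hi₀⟩ := Finset.exists_mem_eq_inf' hne (fun i => (1 - |b i|) / |a i|)
  have hVi₀ : V * |a i₀| + |b i₀| = 1 := by
    rw [hVdef, hi₀, div_mul_cancel₀ _ (habs i₀).ne']
    ring
  refine ⟨-V, V, by linarith, hV0, ?_, ?_, ?_⟩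
  · ext μ
    simp only [Set.mem_setOf_eq, Set.mem_Icc, key μ, key2 μ, ← abs_le]
  · -- endpoints achieve value 1
    have main : ∀ μ : ℝ, |μ| = V → max ‖μ • a + b‖ ‖μ • a - b‖ = 1 := by
      intro μ hμ
      refine le_antisymm (fval μ (fun i => by rw [hμ]; exact hVi i)) ?_
      have h1 : |μ * a i₀| + |b i₀| = 1 := by rw [abs_mul, hμ]; exact hVi₀
      calc (1 : ℝ) = max |μ * a i₀ + b i₀| |μ * a i₀ - b i₀| := by
            rw [max_abs_aux]; exact h1.symm
        _ ≤ max ‖μ • a + b‖ ‖μ • a - b‖ := by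
            apply max_le_max
            · rw [← Real.norm_eq_abs]
              exact (norm_le_pi_norm (μ • a + b) i₀)
            · rw [← Real.norm_eq_abs]
              exact (norm_le_pi_norm (μ • a - b) i₀)
    rintro μ (rfl | rfl)
    · exact main _ (by rw [abs_neg, abs_of_nonneg hV0])
    · exact main _ (abs_of_nonneg hV0)
  · -- converse
    intro t ht
    have hmem : ‖t • a + b‖ ≤ 1 ∧ ‖t • a - b‖ ≤ 1 :=
      ⟨le_trans (le_max_left _ _) ht.le, le_trans (le_max_right _ _) ht.le⟩
    have htV : |t| ≤ V := (key2 t).1 ((key t).1 hmem)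
    have : |t| = V := by
      by_contra hcon
      have hlt : |t| < V := lt_of_le_of_ne htV hcon
      -- then both norms < 1
      have hstrict : ∀ i, |t| * |a i| + |b i| < 1 := fun i =>
        lt_of_lt_of_le (by nlinarith [habs i, hVi i]) (hVi i)
      have h1 : ‖t • a + b‖ < 1 := by
        obtain ⟨i, hi⟩ := norm_attained_aux (t • a + b)
        rw [hi]
        calc |(t • a + b) i| = |t * a i + b i| := by simp [smul_eq_mul]
          _ ≤ |t * a i| + |b i| := abs_add_le _ _
          _ = |t| * |a i| + |b i| := by rw [abs_mul]
          _ < 1 := hstrict i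
      have h2 : ‖t • a - b‖ < 1 := by
        obtain ⟨i, hi⟩ := norm_attained_aux (t • a - b)
        rw [hi]
        calc |(t • a - b) i| = |t * a i - b i| := by simp [smul_eq_mul]
          _ ≤ |t * a i| + |b i| := by
              calc |t * a i - b i| = |t * a i + -(b i)| := by ring_nf
                _ ≤ |t * a i| + |-(b i)| := abs_add_le _ _
                _ = |t * a i| + |b i| := by rw [abs_neg]
          _ = |t| * |a i| + |b i| := by rw [abs_mul]
          _ < 1 := hstrict i
      exact absurd ht (ne_of_lt (max_lt h1 h2))
    rcases abs_eq hV0 |>.1 this with h | h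
    · right; exact h
    · left; exact h
end
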